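/- arXiv:1812.00386 — 3 statements merged into one kernel-verified Lean document; each statement's English description precedes it below -/
import Mathlib

section
/- Every g-orthonormal basis (Λ_i)_{i∈ℕ} for H with respect to K admits a representation: there exists a bounded linear operator T : H → H with ‖T‖ ≤ 1 such that Λ_{i+1} = Λ_i ∘ T for all i ∈ ℕ. -/
open ContinuousLinearMap

/-! The adjoints `Λ_i*` are isometries `K → H` with mutually orthogonal ranges, so
`x ↦ ∑ Λ_j* (x j)` is an isometry `ℓ²(K) → H` and `Λ_i (∑ Λ_j* (x j)) = x i`. Hence
`T f := ∑ Λ_j* (Λ_{j+1} f)` satisfies `Λ_i T = Λ_{i+1}`, and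
`‖T f‖² = ∑_{j ≥ 1} ‖Λ_j f‖² ≤ ‖f‖²` by Parseval. -/

section Analysis

variable {𝕜 ι E F : Type*} [NontriviallyNormedField 𝕜] [NormedAddCommGroup E] [NormedSpace 𝕜 E]
  [NormedAddCommGroup F] [NormedSpace 𝕜 F]

theorem memℓp_two_iff_summable_norm_sq {f : ι → F} :
    Memℓp f 2 ↔ Summable fun i => ‖f i‖ ^ 2 := by
  rw [memℓp_gen_iff (by norm_num)]
  norm_num

theorem lp.norm_two_le_of_tsum_le {C : ℝ} (hC : 0 ≤ C) {f : lp (fun _ : ι => F) 2}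
    (hf : ∑' i, ‖f i‖ ^ 2 ≤ C ^ 2) : ‖f‖ ≤ C :=
  lp.norm_le_of_tsum_le (by norm_num) hC (by norm_num; exact hf)

noncomputable def analysisOperator (A : ι → E →L[𝕜] F) (hA : ∀ x, Summable fun i => ‖A i x‖ ^ 2)
    {C : ℝ} (hC : 0 ≤ C) (hbound : ∀ x, ∑' i, ‖A i x‖ ^ 2 ≤ (C * ‖x‖) ^ 2) :
    E →L[𝕜] lp (fun _ : ι => F) 2 :=
  LinearMap.mkContinuous
    { toFun := fun x => ⟨fun i => A i x, memℓp_two_iff_summable_norm_sq.2 (hA x)⟩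
      map_add' := fun x y => lp.ext <| funext fun i => map_add (A i) x y
      map_smul' := fun c x => lp.ext <| funext fun i => map_smul (A i) c x }
    C fun x => lp.norm_two_le_of_tsum_le (by positivity) (hbound x)

variable (A : ι → E →L[𝕜] F) (hA : ∀ x, Summable fun i => ‖A i x‖ ^ 2) {C : ℝ} (hC : 0 ≤ C)
  (hbound : ∀ x, ∑' i, ‖A i x‖ ^ 2 ≤ (C * ‖x‖) ^ 2)

@[simp]
theorem analysisOperator_apply_apply (x : E) (i : ι) :
    analysisOperator A hA hC hbound x i = A i x :=
  rfl

theorem norm_analysisOperator_le : ‖analysisOperator A hA hC hbound‖ ≤ C :=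
  LinearMap.mkContinuous_norm_le _ hC _

end Analysis

section GOrthonormal

variable {𝕜 ι E F : Type*} [RCLike 𝕜] [DecidableEq ι]
  [NormedAddCommGroup E] [InnerProductSpace 𝕜 E] [CompleteSpace E]
  [NormedAddCommGroup F] [InnerProductSpace 𝕜 F] [CompleteSpace F]

def IsGOrthonormal (Λ : ι → E →L[𝕜] F) : Prop :=
  ∀ (i j : ι) (g h : F),
    inner 𝕜 (adjoint (Λ i) g) (adjoint (Λ j) h) = if i = j then inner 𝕜 g h else 0

namespace IsGOrthonormal

variable {Λ : ι → E →L[𝕜] F}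

theorem norm_adjoint_apply (hΛ : IsGOrthonormal Λ) (i : ι) (g : F) :
    ‖adjoint (Λ i) g‖ = ‖g‖ := by
  have h := hΛ i i g g
  rw [if_pos rfl, inner_self_eq_norm_sq_to_K, inner_self_eq_norm_sq_to_K] at h
  exact (pow_left_inj₀ (norm_nonneg _) (norm_nonneg _) two_ne_zero).1 (by exact_mod_cast h)

theorem apply_adjoint_apply (hΛ : IsGOrthonormal Λ) (i j : ι) (g : F) :
    Λ i (adjoint (Λ j) g) = if i = j then g else 0 := by
  refine ext_inner_left 𝕜 fun h => ?_
  rw [← adjoint_inner_left, hΛ i j h g]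
  split_ifs <;> simp

noncomputable def adjointIsometry (hΛ : IsGOrthonormal Λ) (i : ι) : F →ₗᵢ[𝕜] E :=
  { (adjoint (Λ i) : F →ₗ[𝕜] E) with norm_map' := hΛ.norm_adjoint_apply i }

theorem orthogonalFamily (hΛ : IsGOrthonormal Λ) :
    OrthogonalFamily 𝕜 (fun _ : ι => F) hΛ.adjointIsometry :=
  fun i j hij g h => by simpa [adjointIsometry, hij] using hΛ i j g h

theorem apply_linearIsometry (hΛ : IsGOrthonormal Λ) (i : ι) (x : lp (fun _ : ι => F) 2) :
    Λ i (hΛ.orthogonalFamily.linearIsometry x) = x i := by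
  rw [OrthogonalFamily.linearIsometry_apply, (Λ i).map_tsum (hΛ.orthogonalFamily.summable_of_lp x)]
  simp [adjointIsometry, hΛ.apply_adjoint_apply]

end IsGOrthonormal

end GOrthonormal

theorem gOrthonormalBasis_has_representation_general
    {H K : Type*} [NormedAddCommGroup H] [InnerProductSpace ℂ H] [CompleteSpace H]
    [NormedAddCommGroup K] [InnerProductSpace ℂ K] [CompleteSpace K]
    (Λ : ℕ → (H →L[ℂ] K))
    (horth : ∀ (i j : ℕ) (g h : K),
      (inner ℂ (ContinuousLinearMap.adjoint (Λ i) g) (ContinuousLinearMap.adjoint (Λ j) h) : ℂ) =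
        if i = j then (inner ℂ g h : ℂ) else 0)
    (hsum : ∀ f : H, Summable fun i : ℕ => ‖Λ i f‖ ^ 2)
    (hparseval : ∀ f : H, ∑' i : ℕ, ‖Λ i f‖ ^ 2 = ‖f‖ ^ 2) :
    ∃ T : H →L[ℂ] H, ‖T‖ ≤ 1 ∧ ∀ i : ℕ, Λ (i + 1) = (Λ i).comp T := by
  have hΛ : IsGOrthonormal Λ := horth
  have hsum_shift (f : H) : Summable fun i => ‖Λ (i + 1) f‖ ^ 2 :=
    (hsum f).comp_injective (add_left_injective 1)
  have hbessel_shift (f : H) : ∑' i, ‖Λ (i + 1) f‖ ^ 2 ≤ (1 * ‖f‖) ^ 2 := by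
    rw [one_mul, ← hparseval f]
    exact tsum_comp_le_tsum_of_inj (hsum f) (fun i => by positivity) (add_left_injective 1)
  let A := analysisOperator (fun i => Λ (i + 1)) hsum_shift zero_le_one hbessel_shift
  refine ⟨hΛ.orthogonalFamily.linearIsometry.toContinuousLinearMap.comp A, ?_, fun i => ?_⟩
  · rw [LinearIsometry.norm_toContinuousLinearMap_comp]
    exact norm_analysisOperator_le ..
  · ext f
    simp [A, hΛ.apply_linearIsometry]

/-- Every g-orthonormal basis `(Λ_i)_{i∈ℕ}` for `H` with respect to `K` admits a
representation by a bounded operator `T : H → H` with `‖T‖ ≤ 1`, i.e. `Λ_{i+1} = Λ_i ∘ T`. -/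
theorem gOrthonormalBasis_has_representation
    {H K : Type*} [NormedAddCommGroup H] [InnerProductSpace ℂ H] [CompleteSpace H]
    [TopologicalSpace.SeparableSpace H]
    [NormedAddCommGroup K] [InnerProductSpace ℂ K] [CompleteSpace K]
    [TopologicalSpace.SeparableSpace K]
    (Λ : ℕ → (H →L[ℂ] K))
    (horth : ∀ (i j : ℕ) (g h : K),
      (inner ℂ (ContinuousLinearMap.adjoint (Λ i) g) (ContinuousLinearMap.adjoint (Λ j) h) : ℂ) =
        if i = j then (inner ℂ g h : ℂ) else 0)
    (hsum : ∀ f : H, Summable fun i : ℕ => ‖Λ i f‖ ^ 2)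
    (hparseval : ∀ f : H, ∑' i : ℕ, ‖Λ i f‖ ^ 2 = ‖f‖ ^ 2) :
    ∃ T : H →L[ℂ] H, ‖T‖ ≤ 1 ∧ ∀ i : ℕ, Λ (i + 1) = (Λ i).comp T :=
  gOrthonormalBasis_has_representation_general Λ horth hsum hparseval
end

section
/- Let Λ = (Λ_i)_{i∈ℤ} be a g-frame for H with respect to K represented by an invertible bounded operator T : H → H with bounded inverse, and let S : H → H be the g-frame operator of Λ (so S f = Σ_{i∈ℤ} Λ_i*(Λ_i f) for all f ∈ H; S is positive and invertible). Then T* S T = S; consequently S T S⁻¹ = (T*)⁻¹, and the canonical dual g-frame (Λ_i ∘ S⁻¹)_{i∈ℤ} is represented by (T*)⁻¹, i.e. Λ_{i+1} ∘ S⁻¹ = (Λ_i ∘ S⁻¹) ∘ (T*)⁻¹ for all i ∈ ℤ. -/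
/-!
`T* S T f = ∑ (Λ_i T)* (Λ_i T) f = ∑ Λ_{i+1}* Λ_{i+1} f`, which is `S f` after shifting the index
(the adjoint of the invertible `T` commutes with the `tsum`, summable or not). The remaining
identities are algebra with the inverses `S⁻¹` and `(T⁻¹)* = (T*)⁻¹`.
-/

open ContinuousLinearMap

theorem mul_mul_eq_of_mul_mul_eq {M : Type*} [Monoid M] {s s' t u u' : M}
    (h : u * (s * t) = s) (hu : u' * u = 1) (hs : s * s' = 1) : s * (t * s') = u' :=
  calc s * (t * s') = u' * u * (s * t) * s' := by rw [hu, one_mul, mul_assoc]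
    _ = u' := by rw [mul_assoc u' u, h, mul_assoc, hs, mul_one]

section

variable {𝕜 E F K : Type*} [RCLike 𝕜]
  [NormedAddCommGroup E] [InnerProductSpace 𝕜 E] [CompleteSpace E]
  [NormedAddCommGroup F] [InnerProductSpace 𝕜 F] [CompleteSpace F]
  [NormedAddCommGroup K] [InnerProductSpace 𝕜 K] [CompleteSpace K]

namespace ContinuousLinearEquiv

theorem adjoint_symm_comp_adjoint (e : E ≃L[𝕜] F) :
    adjoint (e.symm : F →L[𝕜] E) ∘L adjoint (e : E →L[𝕜] F) = .id 𝕜 F := by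
  rw [← adjoint_comp, coe_comp_coe_symm, adjoint_id]

noncomputable def adjoint (e : E ≃L[𝕜] F) : F ≃L[𝕜] E :=
  equivOfInverse (ContinuousLinearMap.adjoint (e : E →L[𝕜] F))
    (ContinuousLinearMap.adjoint (e.symm : F →L[𝕜] E))
    (fun x => congr($(adjoint_symm_comp_adjoint e) x))
    (fun x => congr($(adjoint_symm_comp_adjoint e.symm) x))

end ContinuousLinearEquiv

-- A plain function rather than an operator, so that no summability of the series is assumed.
noncomputable def gFrameOperator {ι : Type*} (Λ : ι → E →L[𝕜] K) (f : E) : E :=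
  ∑' i, adjoint (Λ i) (Λ i f)

theorem gFrameOperator_comp {ι : Type*} (Λ : ι → F →L[𝕜] K) (e : E ≃L[𝕜] F) (f : E) :
    gFrameOperator (fun i => Λ i ∘L (e : E →L[𝕜] F)) f =
      adjoint (e : E →L[𝕜] F) (gFrameOperator Λ (e f)) := by
  simp only [gFrameOperator, adjoint_comp, comp_apply]
  exact e.adjoint.map_tsum.symm

theorem gFrameOperator_comp_add_right {ι : Type*} [AddGroup ι] (Λ : ι → E →L[𝕜] K) (k : ι) :
    gFrameOperator (fun i => Λ (i + k)) = gFrameOperator Λ :=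
  funext fun f => (Equiv.addRight k).tsum_eq fun i => adjoint (Λ i) (Λ i f)

theorem adjoint_apply_gFrameOperator_apply_of_succ_eq_comp (Λ : ℤ → E →L[𝕜] K)
    (T : E ≃L[𝕜] E) (hrep : ∀ i, Λ (i + 1) = Λ i ∘L (T : E →L[𝕜] E)) (f : E) :
    adjoint (T : E →L[𝕜] E) (gFrameOperator Λ (T f)) = gFrameOperator Λ f := by
  rw [← gFrameOperator_comp, ← funext hrep, gFrameOperator_comp_add_right]

end

theorem gframe_Z_canonical_dual_representation_general
    {H K : Type*} [NormedAddCommGroup H] [InnerProductSpace ℂ H] [CompleteSpace H]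
    [NormedAddCommGroup K] [InnerProductSpace ℂ K] [CompleteSpace K]
    (Λ : ℤ → (H →L[ℂ] K))
    (T : H ≃L[ℂ] H) (hrep : ∀ i : ℤ, Λ (i + 1) = (Λ i).comp (T : H →L[ℂ] H))
    (S : H →L[ℂ] H)
    (hS : ∀ f : H, S f = ∑' i : ℤ, ContinuousLinearMap.adjoint (Λ i) (Λ i f))
    (S' : H →L[ℂ] H) (hSS' : S.comp S' = 1) (hS'S : S'.comp S = 1) :
    ((ContinuousLinearMap.adjoint (T : H →L[ℂ] H)).comp (S.comp (T : H →L[ℂ] H)) = S) ∧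
    ((S.comp ((T : H →L[ℂ] H).comp S')) =
      ContinuousLinearMap.adjoint (T.symm : H →L[ℂ] H)) ∧
    (∀ i : ℤ, (Λ (i + 1)).comp S' =
      ((Λ i).comp S').comp (ContinuousLinearMap.adjoint (T.symm : H →L[ℂ] H))) := by
  have hS_eq : ⇑S = gFrameOperator Λ := funext hS
  have hTST : adjoint (T : H →L[ℂ] H) ∘L (S ∘L (T : H →L[ℂ] H)) = S := by
    ext f
    simp only [comp_apply, hS_eq]
    exact adjoint_apply_gFrameOperator_apply_of_succ_eq_comp Λ T hrep f
  have hSTS' : S ∘L ((T : H →L[ℂ] H) ∘L S') = adjoint (T.symm : H →L[ℂ] H) :=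
    mul_mul_eq_of_mul_mul_eq hTST T.adjoint_symm_comp_adjoint hSS'
  refine ⟨hTST, hSTS', fun i => ?_⟩
  rw [hrep, ← hSTS', comp_assoc, comp_assoc, ← comp_assoc S' S, hS'S, one_def, id_comp]

/-- If a g-frame `Λ = (Λ_i)_{i∈ℤ}` is represented by `T ∈ GL(H)` and `S` is its
(positive, invertible) g-frame operator, then `T* S T = S`, hence `S T S⁻¹ = (T*)⁻¹ = (T⁻¹)*`,
and the canonical dual `(Λ_i ∘ S⁻¹)` is represented by `(T*)⁻¹`. -/
theorem gframe_Z_canonical_dual_representation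
    {H K : Type*} [NormedAddCommGroup H] [InnerProductSpace ℂ H] [CompleteSpace H]
    [TopologicalSpace.SeparableSpace H]
    [NormedAddCommGroup K] [InnerProductSpace ℂ K] [CompleteSpace K]
    [TopologicalSpace.SeparableSpace K]
    (Λ : ℤ → (H →L[ℂ] K)) (A B : ℝ) (hA : 0 < A) (hAB : A ≤ B)
    (hsum : ∀ f : H, Summable fun i : ℤ => ‖Λ i f‖ ^ 2)
    (hlow : ∀ f : H, A * ‖f‖ ^ 2 ≤ ∑' i : ℤ, ‖Λ i f‖ ^ 2)
    (hup : ∀ f : H, ∑' i : ℤ, ‖Λ i f‖ ^ 2 ≤ B * ‖f‖ ^ 2)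
    (T : H ≃L[ℂ] H) (hrep : ∀ i : ℤ, Λ (i + 1) = (Λ i).comp (T : H →L[ℂ] H))
    (S : H →L[ℂ] H)
    (hS : ∀ f : H, S f = ∑' i : ℤ, ContinuousLinearMap.adjoint (Λ i) (Λ i f))
    (hSpos : S.IsPositive)
    (S' : H →L[ℂ] H) (hSS' : S.comp S' = 1) (hS'S : S'.comp S = 1) :
    ((ContinuousLinearMap.adjoint (T : H →L[ℂ] H)).comp (S.comp (T : H →L[ℂ] H)) = S) ∧
    ((S.comp ((T : H →L[ℂ] H).comp S')) =
      ContinuousLinearMap.adjoint (T.symm : H →L[ℂ] H)) ∧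
    (∀ i : ℤ, (Λ (i + 1)).comp S' =
      ((Λ i).comp S').comp (ContinuousLinearMap.adjoint (T.symm : H →L[ℂ] H))) :=
  gframe_Z_canonical_dual_representation_general Λ T hrep S hS S' hSS' hS'S
end

section
/- Let F = (f_i)_{i∈ℕ} be a frame for H with bounds A, B. Then the following are equivalent: (i) there exists a bounded operator T : H → H with f_{i+1} = T f_i for all i ∈ ℕ (equivalently f_i = T^{i−1} f_1); (ii) the kernel of the synthesis operator is invariant under the right-shift, i.e. for every sequence (c_i)_{i∈ℕ} ∈ ℓ²(ℕ, ℂ) with Σ_{i∈ℕ} c_i f_i = 0 one also has Σ_{i∈ℕ} c_i f_{i+1} = 0. In the affirmative case, T can be chosen with ‖T‖ ≤ √(B/A); moreover, if H is infinite-dimensional then necessarily ‖T‖ ≥ 1. -/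
/-!
The analysis operator `Θ g = (⟪f i, g⟫)ᵢ` of a frame maps `H` into `ℓ²` and is bounded below by
`√A`, so the frame operator `Θ†Θ` is invertible and the synthesis operator `Θ†` is onto. A bounded
`T` with `T f_i = f_{i+1}` is exactly an operator with `T ∘ Θ† = Θ'†`, where `Θ'` is the analysis
operator of the shifted sequence; such a `T` exists iff `ker Θ† ≤ ker Θ'†`, and then
`T = Θ'† Θ (Θ†Θ)⁻¹` has norm at most `‖Θ'†‖ / √A ≤ √(B / A)`.

If `‖T‖ < 1` then `‖f_i‖ ≤ ‖T‖ⁱ ‖f_0‖`, so `∑ ‖f_i‖²` converges. In infinite dimension this is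
impossible for a frame: a nonzero `g` orthogonal to `f_0, …, f_{n-1}` gives
`A ‖g‖² ≤ ‖g‖² ∑_{i ≥ n} ‖f_i‖²`, and the tail eventually drops below `A`.
-/

open scoped InnerProductSpace InnerProduct lp

theorem lp.norm_sq_eq_tsum {ι : Type*} {E : ι → Type*} [∀ i, NormedAddCommGroup (E i)]
    (x : lp E 2) : ‖x‖ ^ 2 = ∑' i, ‖x i‖ ^ 2 := by
  simpa using lp.norm_rpow_eq_tsum (p := 2) (by norm_num) x

theorem memℓp_two_iff_summable_sq {ι : Type*} {E : ι → Type*} [∀ i, NormedAddCommGroup (E i)]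
    {f : ∀ i, E i} : Memℓp f 2 ↔ Summable fun i => ‖f i‖ ^ 2 := by
  rw [memℓp_gen_iff (by norm_num)]
  norm_num

namespace ContinuousLinearMap

variable {𝕜 E F G : Type*} [RCLike 𝕜]
  [NormedAddCommGroup E] [InnerProductSpace 𝕜 E] [CompleteSpace E]
  [NormedAddCommGroup F] [InnerProductSpace 𝕜 F]
  [NormedAddCommGroup G] [InnerProductSpace 𝕜 G] [CompleteSpace G]
  {U : G →L[𝕜] E} {c : ℝ}

theorem norm_adjoint_apply_le_of_bound (hc : 0 < c) (hU : ∀ x, c * ‖x‖ ≤ ‖(U†) x‖) (x : E) :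
    ‖(U†) x‖ ≤ ‖U ((U†) x)‖ / c := by
  have key : ‖(U†) x‖ ^ 2 ≤ ‖U ((U†) x)‖ / c * ‖(U†) x‖ := by
    calc ‖(U†) x‖ ^ 2 = RCLike.re ⟪U ((U†) x), x⟫_𝕜 := by
          rw [← adjoint_inner_right, inner_self_eq_norm_sq]
      _ ≤ ‖U ((U†) x)‖ * ‖x‖ := (RCLike.re_le_norm _).trans (norm_inner_le_norm _ _)
      _ ≤ ‖U ((U†) x)‖ * (‖(U†) x‖ / c) := by
          gcongr
          rw [le_div_iff₀ hc, mul_comm]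
          exact hU x
      _ = ‖U ((U†) x)‖ / c * ‖(U†) x‖ := by ring
  rcases (norm_nonneg ((U†) x)).eq_or_lt with h | h
  · rw [← h]; positivity
  · rw [sq] at key
    exact le_of_mul_le_mul_right key h

theorem bijective_comp_adjoint_of_bound (hc : 0 < c) (hU : ∀ x, c * ‖x‖ ≤ ‖(U†) x‖) :
    Function.Bijective (U ∘L U†) := by
  have hbelow : AntilipschitzWith (⟨(c ^ 2)⁻¹, by positivity⟩ : NNReal) (U ∘L U†) := by
    refine (U ∘L U†).antilipschitz_of_bound fun x => ?_
    have h := (hU x).trans (norm_adjoint_apply_le_of_bound hc hU x)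
    rw [le_div_iff₀ hc] at h
    show ‖x‖ ≤ (c ^ 2)⁻¹ * ‖U ((U†) x)‖
    rw [inv_mul_eq_div, le_div_iff₀ (by positivity)]
    linarith
  have hker : (U†).ker = ⊥ := by
    refine (Submodule.eq_bot_iff _).mpr fun x hx => norm_le_zero_iff.mp ?_
    have h := hU x
    rw [show (U†) x = 0 from hx, norm_zero] at h
    exact nonpos_of_mul_nonpos_right h hc
  have hrange : (U ∘L U†).range = ⊤ := by
    have hclosed : IsClosed ((U ∘L U†).range : Set E) := by
      rw [LinearMap.coe_range]
      exact hbelow.isClosed_range (U ∘L U†).uniformContinuous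
    rw [← hclosed.submodule_topologicalClosure_eq, Submodule.topologicalClosure_eq_top_iff,
      orthogonal_range, adjoint_comp, adjoint_adjoint, ker_self_comp_adjoint, hker]
  exact ⟨hbelow.injective, LinearMap.range_eq_top.mp hrange⟩

theorem exists_comp_eq_of_ker_le (hc : 0 < c) (hU : ∀ x, c * ‖x‖ ≤ ‖(U†) x‖)
    {V : G →L[𝕜] F} (hker : U.ker ≤ V.ker) : ∃ T : E →L[𝕜] F, T ∘L U = V ∧ ‖T‖ ≤ ‖V‖ / c := by
  have hS := bijective_comp_adjoint_of_bound hc hU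
  set S := ContinuousLinearEquiv.ofBijective (U ∘L U†) (LinearMap.ker_eq_bot.mpr hS.1)
    (LinearMap.range_eq_top.mpr hS.2)
  have hUS (y : E) : U ((U†) (S.symm y)) = y := S.apply_symm_apply y
  refine ⟨V ∘L U† ∘L S.symm.toContinuousLinearMap, ?_, ?_⟩
  · ext x
    have hmem : (U†) (S.symm (U x)) - x ∈ U.ker := by
      simp [LinearMap.mem_ker, hUS]
    simpa [sub_eq_zero] using hker hmem
  · refine opNorm_le_bound _ (by positivity) fun y => ?_
    calc ‖V ((U†) (S.symm y))‖ ≤ ‖V‖ * ‖(U†) (S.symm y)‖ := V.le_opNorm _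
      _ ≤ ‖V‖ * (‖y‖ / c) := by
          gcongr
          simpa [hUS] using norm_adjoint_apply_le_of_bound hc hU (S.symm y)
      _ = ‖V‖ / c * ‖y‖ := by ring

end ContinuousLinearMap

section Bessel

variable (𝕜 : Type*) {E F ι : Type*} [RCLike 𝕜] [NormedAddCommGroup E] [InnerProductSpace 𝕜 E]

structure IsBesselSeq (f : ι → E) (B : ℝ) : Prop where
  summable : ∀ g, Summable fun i => ‖⟪g, f i⟫_𝕜‖ ^ 2
  tsum_le : ∀ g, ∑' i, ‖⟪g, f i⟫_𝕜‖ ^ 2 ≤ B * ‖g‖ ^ 2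

variable {𝕜} {f : ι → E} {B : ℝ}

namespace IsBesselSeq

theorem comp_injective {κ : Type*} (hf : IsBesselSeq 𝕜 f B) {e : κ → ι}
    (he : Function.Injective e) : IsBesselSeq 𝕜 (f ∘ e) B where
  summable g := (hf.summable g).comp_injective he
  tsum_le g := (tsum_comp_le_tsum_of_inj (hf.summable g) (fun _ => by positivity) he).trans
    (hf.tsum_le g)

theorem memℓp_inner (hf : IsBesselSeq 𝕜 f B) (g : E) : Memℓp (fun i => ⟪f i, g⟫_𝕜) 2 :=
  memℓp_two_iff_summable_sq.mpr (by simpa only [norm_inner_symm] using hf.summable g)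

noncomputable def analysis (hf : IsBesselSeq 𝕜 f B) : E →L[𝕜] ℓ²(ι, 𝕜) :=
  LinearMap.mkContinuous
    { toFun g := ⟨fun i => ⟪f i, g⟫_𝕜, hf.memℓp_inner g⟩
      map_add' g h := by ext i; simp [inner_add_right]; rfl
      map_smul' a g := by ext i; simp [inner_smul_right] }
    (Real.sqrt B) fun g => by
      rw [← Real.sqrt_sq (norm_nonneg _), ← Real.sqrt_sq (norm_nonneg g), ← Real.sqrt_mul',
        lp.norm_sq_eq_tsum]
      · refine Real.sqrt_le_sqrt ((tsum_congr fun i => ?_).trans_le (hf.tsum_le g))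
        exact congrArg (· ^ 2) (norm_inner_symm _ _)
      · positivity

@[simp]
theorem analysis_apply (hf : IsBesselSeq 𝕜 f B) (g : E) (i : ι) : hf.analysis g i = ⟪f i, g⟫_𝕜 :=
  rfl

theorem norm_analysis_le (hf : IsBesselSeq 𝕜 f B) : ‖hf.analysis‖ ≤ Real.sqrt B :=
  LinearMap.mkContinuous_norm_le _ (Real.sqrt_nonneg B) _

theorem norm_analysis_sq (hf : IsBesselSeq 𝕜 f B) (g : E) :
    ‖hf.analysis g‖ ^ 2 = ∑' i, ‖⟪g, f i⟫_𝕜‖ ^ 2 := by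
  simp [lp.norm_sq_eq_tsum, norm_inner_symm]

theorem sqrt_mul_norm_le_norm_analysis (hf : IsBesselSeq 𝕜 f B) {A : ℝ}
    (hlow : ∀ g, A * ‖g‖ ^ 2 ≤ ∑' i, ‖⟪g, f i⟫_𝕜‖ ^ 2) (g : E) :
    Real.sqrt A * ‖g‖ ≤ ‖hf.analysis g‖ := by
  rw [← Real.sqrt_sq (norm_nonneg g), ← Real.sqrt_mul' _ (by positivity),
    ← Real.sqrt_sq (norm_nonneg (hf.analysis g)), hf.norm_analysis_sq]
  exact Real.sqrt_le_sqrt (hlow g)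

variable [CompleteSpace E] [NormedAddCommGroup F] [InnerProductSpace 𝕜 F] [CompleteSpace F]

theorem adjoint_analysis_single [DecidableEq ι] (hf : IsBesselSeq 𝕜 f B) (i : ι) (a : 𝕜) :
    ((hf.analysis)†) (lp.single 2 i a) = a • f i :=
  ext_inner_right 𝕜 fun g => by
    simp [ContinuousLinearMap.adjoint_inner_left, lp.inner_single_left, inner_smul_left, mul_comm]

theorem hasSum_adjoint_analysis (hf : IsBesselSeq 𝕜 f B) (c : ℓ²(ι, 𝕜)) :
    HasSum (fun i => c i • f i) (((hf.analysis)†) c) := by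
  classical
  simpa [adjoint_analysis_single] using (lp.hasSum_single (by simp) c).mapL ((hf.analysis)†)

theorem comp_adjoint_analysis_eq_iff {g : ι → F} {B' : ℝ} (hf : IsBesselSeq 𝕜 f B)
    (hg : IsBesselSeq 𝕜 g B') (T : E →L[𝕜] F) :
    T ∘L (hf.analysis)† = (hg.analysis)† ↔ ∀ i, T (f i) = g i := by
  classical
  constructor
  · intro h i
    simpa [hf.adjoint_analysis_single, hg.adjoint_analysis_single] using
      congr($h (lp.single 2 i 1))
  · intro h
    ext c
    exact ((hf.hasSum_adjoint_analysis c).mapL T).unique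
      (by simpa [h] using hg.hasSum_adjoint_analysis c)

theorem ker_adjoint_analysis_le_iff {g : ι → F} {B' : ℝ} (hf : IsBesselSeq 𝕜 f B)
    (hg : IsBesselSeq 𝕜 g B') :
    ((hf.analysis)†).ker ≤ ((hg.analysis)†).ker ↔
      ∀ c : ι → 𝕜, Summable (fun i => ‖c i‖ ^ 2) →
        ∑' i, c i • f i = 0 → ∑' i, c i • g i = 0 := by
  constructor
  · intro h c hc hc0
    let x : ℓ²(ι, 𝕜) := ⟨c, memℓp_two_iff_summable_sq.mpr hc⟩
    exact (hg.hasSum_adjoint_analysis x).tsum_eq.trans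
      (h ((hf.hasSum_adjoint_analysis x).tsum_eq.symm.trans hc0))
  · intro h x hx
    exact (hg.hasSum_adjoint_analysis x).tsum_eq.symm.trans
      (h x (memℓp_two_iff_summable_sq.mp x.2) ((hf.hasSum_adjoint_analysis x).tsum_eq.trans hx))

end IsBesselSeq

end Bessel

section PowerBound

variable {𝕜 E : Type*} [NontriviallyNormedField 𝕜] [NormedAddCommGroup E] [NormedSpace 𝕜 E]

theorem norm_le_pow_mul_of_forall_succ_eq {T : E →L[𝕜] E} {f : ℕ → E}
    (hT : ∀ i, f (i + 1) = T (f i)) (i : ℕ) : ‖f i‖ ≤ ‖T‖ ^ i * ‖f 0‖ := by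
  induction i with
  | zero => simp
  | succ i ih =>
    calc ‖f (i + 1)‖ ≤ ‖T‖ * ‖f i‖ := hT i ▸ T.le_opNorm _
      _ ≤ ‖T‖ * (‖T‖ ^ i * ‖f 0‖) := by gcongr
      _ = ‖T‖ ^ (i + 1) * ‖f 0‖ := by ring

theorem summable_norm_sq_of_forall_succ_eq {T : E →L[𝕜] E} (hT1 : ‖T‖ < 1) {f : ℕ → E}
    (hT : ∀ i, f (i + 1) = T (f i)) : Summable fun i => ‖f i‖ ^ 2 := by
  refine ((summable_geometric_of_lt_one (by positivity) (pow_lt_one₀ (norm_nonneg T) hT1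
    two_ne_zero)).mul_left (‖f 0‖ ^ 2)).of_nonneg_of_le (fun _ => by positivity) fun i => ?_
  calc ‖f i‖ ^ 2 ≤ (‖T‖ ^ i * ‖f 0‖) ^ 2 :=
        pow_le_pow_left₀ (norm_nonneg _) (norm_le_pow_mul_of_forall_succ_eq hT i) 2
    _ = ‖f 0‖ ^ 2 * (‖T‖ ^ 2) ^ i := by ring

end PowerBound

section InfiniteDimensional

variable {𝕜 E ι : Type*} [RCLike 𝕜] [NormedAddCommGroup E] [InnerProductSpace 𝕜 E]

theorem exists_ne_zero_forall_inner_eq_zero (hE : ¬ FiniteDimensional 𝕜 E) {s : Set E}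
    (hs : s.Finite) : ∃ g : E, g ≠ 0 ∧ ∀ x ∈ s, ⟪x, g⟫_𝕜 = 0 := by
  set K := Submodule.span 𝕜 s
  have : FiniteDimensional 𝕜 K := FiniteDimensional.span_of_finite 𝕜 hs
  by_contra! h
  have hK : K = ⊤ := by
    refine Submodule.orthogonal_eq_bot_iff.mp ((Submodule.eq_bot_iff _).mpr fun g hg => ?_)
    by_contra hg0
    obtain ⟨x, hx, hxg⟩ := h g hg0
    exact hxg ((Submodule.mem_orthogonal K g).mp hg x (Submodule.subset_span hx))
  exact hE (Module.finite_def.mpr (hK ▸ Submodule.fg_span hs))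

theorem not_summable_norm_sq_of_lower_bound (hE : ¬ FiniteDimensional 𝕜 E) {f : ι → E} {A : ℝ}
    (hA : 0 < A) (hlow : ∀ g, A * ‖g‖ ^ 2 ≤ ∑' i, ‖⟪g, f i⟫_𝕜‖ ^ 2) :
    ¬ Summable fun i => ‖f i‖ ^ 2 := by
  intro hsum
  obtain ⟨s, hs⟩ := ((tendsto_tsum_compl_atTop_zero fun i => ‖f i‖ ^ 2).eventually
    (gt_mem_nhds hA)).exists
  obtain ⟨g, hg0, hg⟩ := exists_ne_zero_forall_inner_eq_zero hE (s.finite_toSet.image f)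
  have hsupp : (Function.support fun i => ‖⟪g, f i⟫_𝕜‖ ^ 2) ⊆ {i | i ∉ s} := by
    intro i hi his
    apply hi
    simp [inner_eq_zero_symm.mp (hg _ ⟨i, his, rfl⟩)]
  have hpt (i : ι) : ‖⟪g, f i⟫_𝕜‖ ^ 2 ≤ ‖g‖ ^ 2 * ‖f i‖ ^ 2 := by
    rw [← mul_pow]
    exact pow_le_pow_left₀ (norm_nonneg _) (norm_inner_le_norm _ _) 2
  have hmaj : Summable fun i => ‖g‖ ^ 2 * ‖f i‖ ^ 2 := hsum.mul_left _
  have hinner_summable := hmaj.of_nonneg_of_le (fun _ => by positivity) hpt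
  have : A * ‖g‖ ^ 2 < A * ‖g‖ ^ 2 := calc
    A * ‖g‖ ^ 2 ≤ ∑' i, ‖⟪g, f i⟫_𝕜‖ ^ 2 := hlow g
    _ = ∑' i : {i // i ∉ s}, ‖⟪g, f i⟫_𝕜‖ ^ 2 := (tsum_subtype_eq_of_support_subset hsupp).symm
    _ ≤ ∑' i : {i // i ∉ s}, ‖g‖ ^ 2 * ‖f i‖ ^ 2 :=
        Summable.tsum_le_tsum (fun i => hpt i) (hinner_summable.subtype _) (hmaj.subtype _)
    _ = ‖g‖ ^ 2 * ∑' i : {i // i ∉ s}, ‖f i‖ ^ 2 := tsum_mul_left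
    _ < ‖g‖ ^ 2 * A := by gcongr
    _ = A * ‖g‖ ^ 2 := mul_comm _ _
  exact lt_irrefl _ this

theorem one_le_norm_of_forall_succ_eq (hE : ¬ FiniteDimensional 𝕜 E) {f : ℕ → E} {A : ℝ}
    (hA : 0 < A) (hlow : ∀ g, A * ‖g‖ ^ 2 ≤ ∑' i, ‖⟪g, f i⟫_𝕜‖ ^ 2) {T : E →L[𝕜] E}
    (hT : ∀ i, f (i + 1) = T (f i)) : 1 ≤ ‖T‖ := by
  by_contra! hT1
  exact not_summable_norm_sq_of_lower_bound hE hA hlow (summable_norm_sq_of_forall_succ_eq hT1 hT)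

end InfiniteDimensional

theorem frame_N_representation_iff_ker_shift_invariant_general
    {H : Type*} [NormedAddCommGroup H] [InnerProductSpace ℂ H] [CompleteSpace H]
    (f : ℕ → H) (A B : ℝ) (hA : 0 < A)
    (hsum : ∀ g : H, Summable fun i : ℕ => ‖(inner ℂ g (f i) : ℂ)‖ ^ 2)
    (hlow : ∀ g : H, A * ‖g‖ ^ 2 ≤ ∑' i : ℕ, ‖(inner ℂ g (f i) : ℂ)‖ ^ 2)
    (hup : ∀ g : H, ∑' i : ℕ, ‖(inner ℂ g (f i) : ℂ)‖ ^ 2 ≤ B * ‖g‖ ^ 2) :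
    ((∃ T : H →L[ℂ] H, ∀ i : ℕ, f (i + 1) = T (f i)) ↔
      (∀ c : ℕ → ℂ, Summable (fun i : ℕ => ‖c i‖ ^ 2) →
        (∑' i : ℕ, c i • f i) = 0 → (∑' i : ℕ, c i • f (i + 1)) = 0)) ∧
    ((∃ T : H →L[ℂ] H, ∀ i : ℕ, f (i + 1) = T (f i)) →
      ∃ T : H →L[ℂ] H, (∀ i : ℕ, f (i + 1) = T (f i)) ∧ ‖T‖ ≤ Real.sqrt (B / A)) ∧
    (¬ FiniteDimensional ℂ H →
      ∀ T : H →L[ℂ] H, (∀ i : ℕ, f (i + 1) = T (f i)) → 1 ≤ ‖T‖) := by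
  have hf : IsBesselSeq ℂ f B := ⟨hsum, hup⟩
  have hshift : IsBesselSeq ℂ (fun i => f (i + 1)) B := hf.comp_injective (add_left_injective 1)
  have hrepr (T : H →L[ℂ] H) :
      (∀ i, f (i + 1) = T (f i)) ↔ T ∘L (hf.analysis)† = (hshift.analysis)† := by
    simp only [hf.comp_adjoint_analysis_eq_iff hshift, eq_comm]
  have hU (g : H) : Real.sqrt A * ‖g‖ ≤ ‖(((hf.analysis)†)†) g‖ := by
    simpa using hf.sqrt_mul_norm_le_norm_analysis hlow g
  have hfactor (hker : ((hf.analysis)†).ker ≤ ((hshift.analysis)†).ker) :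
      ∃ T : H →L[ℂ] H, (∀ i, f (i + 1) = T (f i)) ∧ ‖T‖ ≤ Real.sqrt (B / A) := by
    obtain ⟨T, hT, hnorm⟩ :=
      ContinuousLinearMap.exists_comp_eq_of_ker_le (Real.sqrt_pos.mpr hA) hU hker
    refine ⟨T, (hrepr T).mpr hT, hnorm.trans ?_⟩
    rw [LinearIsometryEquiv.norm_map, Real.sqrt_div' _ hA.le]
    gcongr
    exact hshift.norm_analysis_le
  have hker_of_repr {T : H →L[ℂ] H} (hT : ∀ i, f (i + 1) = T (f i)) :
      ((hf.analysis)†).ker ≤ ((hshift.analysis)†).ker := by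
    rw [← (hrepr T).mp hT]
    exact LinearMap.ker_le_ker_comp _ _
  rw [← hf.ker_adjoint_analysis_le_iff hshift]
  exact ⟨⟨fun ⟨_, hT⟩ => hker_of_repr hT, fun hker => (hfactor hker).imp fun _ => And.left⟩,
    fun ⟨_, hT⟩ => hfactor (hker_of_repr hT), fun hE _ => one_le_norm_of_forall_succ_eq hE hA hlow⟩

/-- For a frame `F = (f_i)_{i∈ℕ}` for `H` with bounds `A, B`, the existence of a
bounded operator `T` with `f_{i+1} = T f_i` is equivalent to the right-shift invariance of the
kernel of the synthesis operator; in the affirmative case `T` can be chosen with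
`‖T‖ ≤ √(B/A)`, and if `H` is infinite-dimensional then any such `T` has `‖T‖ ≥ 1`. -/
theorem frame_N_representation_iff_ker_shift_invariant
    {H : Type*} [NormedAddCommGroup H] [InnerProductSpace ℂ H] [CompleteSpace H]
    [TopologicalSpace.SeparableSpace H]
    (f : ℕ → H) (A B : ℝ) (hA : 0 < A) (hAB : A ≤ B)
    (hsum : ∀ g : H, Summable fun i : ℕ => ‖(inner ℂ g (f i) : ℂ)‖ ^ 2)
    (hlow : ∀ g : H, A * ‖g‖ ^ 2 ≤ ∑' i : ℕ, ‖(inner ℂ g (f i) : ℂ)‖ ^ 2)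
    (hup : ∀ g : H, ∑' i : ℕ, ‖(inner ℂ g (f i) : ℂ)‖ ^ 2 ≤ B * ‖g‖ ^ 2) :
    ((∃ T : H →L[ℂ] H, ∀ i : ℕ, f (i + 1) = T (f i)) ↔
      (∀ c : ℕ → ℂ, Summable (fun i : ℕ => ‖c i‖ ^ 2) →
        (∑' i : ℕ, c i • f i) = 0 → (∑' i : ℕ, c i • f (i + 1)) = 0)) ∧
    ((∃ T : H →L[ℂ] H, ∀ i : ℕ, f (i + 1) = T (f i)) →
      ∃ T : H →L[ℂ] H, (∀ i : ℕ, f (i + 1) = T (f i)) ∧ ‖T‖ ≤ Real.sqrt (B / A)) ∧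
    (¬ FiniteDimensional ℂ H →
      ∀ T : H →L[ℂ] H, (∀ i : ℕ, f (i + 1) = T (f i)) → 1 ≤ ‖T‖) :=
  frame_N_representation_iff_ker_shift_invariant_general f A B hA hsum hlow hup
end
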